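/- arXiv:2208.09792 — 3 statements merged into one kernel-verified Lean document; each statement's English description precedes it below -/
import Mathlib

section
/- Let β > 0 be a real number and U ≥ 1 a natural number. The function f(δ) = (β − δ)^(U+1) / (β − (U+1)·δ) is strictly monotonically increasing on the interval [0, β/(U+1)). -/
open Set

lemma sub_mul_pos_of_mem_Ico {β c x : ℝ} (hc : 0 < c) (hx : x ∈ Ico 0 (β / c)) :
    0 < β - c * x := by
  have := (lt_div_iff₀' hc).1 hx.2
  linarith

/-- The numerator of the quotient rule collapses because the exponent `n + 1` of the numerator
equals the slope of the denominator. -/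
lemma hasDerivAt_sub_pow_succ_div_sub_mul (β x : ℝ) (n : ℕ)
    (hx : β - ((n : ℝ) + 1) * x ≠ 0) :
    HasDerivAt (fun δ : ℝ => (β - δ) ^ (n + 1) / (β - ((n : ℝ) + 1) * δ))
      (((n : ℝ) + 1) * (β - x) ^ n * (n * x) / (β - ((n : ℝ) + 1) * x) ^ 2) x := by
  have hnum : HasDerivAt (fun δ : ℝ => (β - δ) ^ (n + 1))
      (((n + 1 : ℕ) : ℝ) * (β - x) ^ n * -1) x := by
    simpa using ((hasDerivAt_id x).const_sub β).fun_pow (n + 1)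
  have hden : HasDerivAt (fun δ : ℝ => β - ((n : ℝ) + 1) * δ) (-((n : ℝ) + 1)) x := by
    simpa using ((hasDerivAt_id x).const_mul ((n : ℝ) + 1)).const_sub β
  refine (hnum.fun_div hden hx).congr_deriv ?_
  push_cast
  rw [pow_succ]
  ring

theorem stmt_1_general (β : ℝ) (U : ℕ) (hU : 1 ≤ U) :
    StrictMonoOn (fun δ : ℝ => (β - δ) ^ (U + 1) / (β - ((U : ℝ) + 1) * δ))
      (Set.Ico 0 (β / ((U : ℝ) + 1))) := by
  have hden : ∀ x ∈ Ico (0 : ℝ) (β / ((U : ℝ) + 1)), 0 < β - ((U : ℝ) + 1) * x :=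
    fun x hx => sub_mul_pos_of_mem_Ico (by positivity) hx
  have hderiv : ∀ x ∈ Ico (0 : ℝ) (β / ((U : ℝ) + 1)), HasDerivAt _ _ x :=
    fun x hx => hasDerivAt_sub_pow_succ_div_sub_mul β x U (hden x hx).ne'
  refine strictMonoOn_of_hasDerivWithinAt_pos (convex_Ico _ _)
    (fun x hx => (hderiv x hx).continuousAt.continuousWithinAt)
    (fun x hx => (hderiv x (interior_subset hx)).hasDerivWithinAt) fun x hx => ?_
  rw [interior_Ico] at hx
  have hdenx := hden x (Ioo_subset_Ico_self hx)
  have hβx : 0 < β - x := by nlinarith [hx.1]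
  have hUpos : (0 : ℝ) < U := by exact_mod_cast hU
  exact div_pos (mul_pos (mul_pos (by positivity) (pow_pos hβx U)) (mul_pos hUpos hx.1))
    (pow_pos hdenx 2)

/-- Paper Lemma 1 (monotonicity step): the exponentiated sum-rate difference
`f(δ) = (β − δ)^(U+1) / (β − (U+1)δ)` is strictly increasing on `[0, β/(U+1))`. -/
theorem stmt_1 (β : ℝ) (U : ℕ) (hU : 1 ≤ U) (hβ : 0 < β) :
    StrictMonoOn (fun δ : ℝ => (β - δ) ^ (U + 1) / (β - ((U : ℝ) + 1) * δ))
      (Set.Ico 0 (β / ((U : ℝ) + 1))) :=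
  stmt_1_general β U hU
end

section
/- Let U ≥ 1 be a natural number and r, r̃ : Fin U → ℝ with r(u) > 0 and r̃(u) > 0 for all u, and suppose ∏ᵤ r(u) < ∏ᵤ r̃(u). Define S(P) = log₂( ((P + ∑ᵤ 1/r(u))/U)^U · ∏ᵤ r(u) ) and S̃(P) = log₂( ((P + ∑ᵤ 1/r̃(u))/U)^U · ∏ᵤ r̃(u) ). Then there exists P₀ such that S(P) < S̃(P) for all P ≥ P₀. -/
/-!
After dividing out the common factor `U ^ U`, one compares `(P + ∑ 1/r) ^ U · ∏ r` with
`(P + ∑ 1/r̃) ^ U · ∏ r̃`. The ratio `(P + ∑ 1/r) / (P + ∑ 1/r̃)` tends to `1` as `P → ∞`, so for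
large `P` the strict inequality `∏ r < ∏ r̃` between the constant factors decides, and `log₂` is
strictly monotone on the positive reals.
-/

open Filter Topology

theorem tendsto_add_div_add_atTop (a b : ℝ) :
    Tendsto (fun x => (x + a) / (x + b)) atTop (𝓝 1) := by
  have hlim : Tendsto (fun x => 1 + (a - b) / (x + b)) atTop (𝓝 (1 + 0)) :=
    tendsto_const_nhds.add <|
      tendsto_const_nhds.div_atTop (tendsto_atTop_add_const_right _ b tendsto_id)
  rw [add_zero] at hlim
  refine hlim.congr' ?_
  filter_upwards [eventually_gt_atTop (-b)] with x hx
  field_simp [(by linarith : x + b ≠ 0)]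
  ring

theorem eventually_add_pow_mul_lt_add_pow_mul (n : ℕ) (a b : ℝ) {A B : ℝ} (hAB : A < B) :
    ∀ᶠ x in atTop, (x + a) ^ n * A < (x + b) ^ n * B := by
  have hratio : Tendsto (fun x => ((x + a) / (x + b)) ^ n * A) atTop (𝓝 A) := by
    simpa using ((tendsto_add_div_add_atTop a b).pow n).mul_const A
  filter_upwards [hratio.eventually (gt_mem_nhds hAB), eventually_gt_atTop (-b)] with x hlt hx
  have hxb : 0 < x + b := by linarith
  calc (x + a) ^ n * A = ((x + a) / (x + b)) ^ n * A * (x + b) ^ n := by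
        rw [div_pow]; field_simp
    _ < B * (x + b) ^ n := mul_lt_mul_of_pos_right hlt (pow_pos hxb n)
    _ = (x + b) ^ n * B := mul_comm _ _

theorem stmt_8_general (U : ℕ) (r rt : Fin U → ℝ)
    (hr : ∀ u, 0 < r u)
    (hprod : ∏ u, r u < ∏ u, rt u) :
    ∃ P₀ : ℝ, ∀ P ≥ P₀,
      Real.logb 2 (((P + ∑ u, 1 / r u) / (U : ℝ)) ^ U * ∏ u, r u) <
      Real.logb 2 (((P + ∑ u, 1 / rt u) / (U : ℝ)) ^ U * ∏ u, rt u) := by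
  -- true also for `U = 0`, since `0 ^ 0 = 1`
  have hUU : (0 : ℝ) < (U : ℝ) ^ U := by exact_mod_cast Nat.pow_self_pos
  have hpos : 0 < ∏ u, r u := Finset.prod_pos fun u _ => hr u
  have hlt := eventually_add_pow_mul_lt_add_pow_mul U (∑ u, 1 / r u) (∑ u, 1 / rt u)
    (div_lt_div_of_pos_right hprod hUU)
  obtain ⟨P₀, hP₀⟩ := eventually_atTop.mp (hlt.and (eventually_gt_atTop (-∑ u, 1 / r u)))
  refine ⟨P₀, fun P hP => ?_⟩
  obtain ⟨hrates, hPbig⟩ := hP₀ P hP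
  have hPa : 0 < P + ∑ u, 1 / r u := neg_lt_iff_pos_add.mp hPbig
  simp only [div_pow, div_mul_eq_mul_div, mul_div_assoc]
  exact Real.logb_lt_logb one_lt_two (by positivity) hrates

/-- Paper Lemma 3 (high-SNR form): if `∏ᵤ rᵤ < ∏ᵤ r̃ᵤ`, then for all
sufficiently large power budgets `P` the water-filled DPC sum rate with gains
`r̃` strictly exceeds the one with gains `r`. -/
theorem stmt_8 (U : ℕ) (hU : 1 ≤ U) (r rt : Fin U → ℝ)
    (hr : ∀ u, 0 < r u) (hrt : ∀ u, 0 < rt u)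
    (hprod : ∏ u, r u < ∏ u, rt u) :
    ∃ P₀ : ℝ, ∀ P ≥ P₀,
      Real.logb 2 (((P + ∑ u, 1 / r u) / (U : ℝ)) ^ U * ∏ u, r u) <
      Real.logb 2 (((P + ∑ u, 1 / rt u) / (U : ℝ)) ^ U * ∏ u, rt u) :=
  stmt_8_general U r rt hr hprod
end

section
/- Let U ≥ 1 be a natural number, g : Fin U → ℝ with g(u) > 0 for all u, and β > 0 a real number. Define the water-filling allocation λ(u) = max(β − 1/g(u), 0). Then for every μ : Fin U → ℝ with μ(u) ≥ 0 for all u and ∑ᵤ μ(u) = ∑ᵤ λ(u), one has ∑ᵤ log(1 + g(u)·μ(u)) ≤ ∑ᵤ log(1 + g(u)·λ(u)). -/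
/-!
The objective is concave, so it lies below its tangent hyperplane at the water-filling point `λ`.
The water level `β` is a Lagrange multiplier: each partial derivative `gᵤ / (1 + gᵤ λᵤ)` equals `1 / β`
where `λᵤ > 0` and is at most `1 / β` where `λᵤ = 0`, so the tangent bound becomes
`∑ log (1 + gᵤ μᵤ) ≤ ∑ log (1 + gᵤ λᵤ) + (∑ μᵤ - ∑ λᵤ) / β`, and the last term vanishes.
-/

open Finset Real

noncomputable section

def waterFilling (β g : ℝ) : ℝ := max (β - 1 / g) 0

lemma waterFilling_nonneg (β g : ℝ) : 0 ≤ waterFilling β g := le_max_right _ _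

lemma log_le_log_add_sub_div {a b : ℝ} (ha : 0 < a) (hb : 0 < b) :
    log a ≤ log b + (a - b) / b := by
  have h := log_le_sub_one_of_pos (div_pos ha hb)
  rw [log_div ha.ne' hb.ne', div_sub_one hb.ne'] at h
  linarith

section

variable {β g x : ℝ}

lemma mul_div_one_add_mul_waterFilling_le (hg : 0 < g) (hβ : 0 < β) (hx : 0 ≤ x) :
    g * (x - waterFilling β g) / (1 + g * waterFilling β g) ≤ (x - waterFilling β g) / β := by
  rcases le_or_gt (β - 1 / g) 0 with hdry | hwet
  · have hw : waterFilling β g = 0 := max_eq_right hdry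
    have hgβ : g ≤ 1 / β := by
      rw [le_div_iff₀ hβ]
      rw [sub_nonpos, le_div_iff₀ hg] at hdry
      linarith
    rw [hw, sub_zero, mul_zero, add_zero, div_one, div_eq_mul_one_div, mul_comm]
    exact mul_le_mul_of_nonneg_left hgβ hx
  · have hw : waterFilling β g = β - 1 / g := max_eq_left hwet.le
    have hden : 1 + g * waterFilling β g = g * β := by
      rw [hw]; field_simp; ring
    rw [hden, mul_div_mul_left _ _ hg.ne']

lemma log_one_add_mul_le_waterFilling (hg : 0 < g) (hβ : 0 < β) (hx : 0 ≤ x) :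
    log (1 + g * x) ≤ log (1 + g * waterFilling β g) + (x - waterFilling β g) / β := by
  have hpos : ∀ {y : ℝ}, 0 ≤ y → 0 < 1 + g * y := fun hy => by positivity
  calc log (1 + g * x)
      ≤ log (1 + g * waterFilling β g) +
          (1 + g * x - (1 + g * waterFilling β g)) / (1 + g * waterFilling β g) :=
        log_le_log_add_sub_div (hpos hx) (hpos (waterFilling_nonneg β g))
    _ = log (1 + g * waterFilling β g) +
          g * (x - waterFilling β g) / (1 + g * waterFilling β g) := by ring
    _ ≤ _ := add_le_add_right (mul_div_one_add_mul_waterFilling_le hg hβ hx) _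

end

end

theorem stmt_13_general (U : ℕ) (g : Fin U → ℝ) (hg : ∀ u, 0 < g u)
    (β : ℝ) (hβ : 0 < β) :
    ∀ μ : Fin U → ℝ, (∀ u, 0 ≤ μ u) →
      (∑ u, μ u = ∑ u, max (β - 1 / g u) 0) →
      ∑ u, Real.log (1 + g u * μ u) ≤
        ∑ u, Real.log (1 + g u * max (β - 1 / g u) 0) := by
  intro μ hμ hsum
  calc ∑ u, log (1 + g u * μ u)
      ≤ ∑ u, (log (1 + g u * waterFilling β (g u)) + (μ u - waterFilling β (g u)) / β) :=
        sum_le_sum fun u _ => log_one_add_mul_le_waterFilling (hg u) hβ (hμ u)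
    _ = ∑ u, log (1 + g u * waterFilling β (g u)) +
          (∑ u, μ u - ∑ u, waterFilling β (g u)) / β := by
        rw [sum_add_distrib, ← sum_div, sum_sub_distrib]
    _ = ∑ u, log (1 + g u * max (β - 1 / g u) 0) := by
        rw [hsum]; simp [waterFilling]

/-- Optimality of water-filling: the allocation `λᵤ = max(β − 1/gᵤ, 0)`
maximizes `∑ᵤ log(1 + gᵤ μᵤ)` among all nonnegative allocations `μ` with the
same total power. -/
theorem stmt_13 (U : ℕ) (hU : 1 ≤ U) (g : Fin U → ℝ) (hg : ∀ u, 0 < g u)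
    (β : ℝ) (hβ : 0 < β) :
    ∀ μ : Fin U → ℝ, (∀ u, 0 ≤ μ u) →
      (∑ u, μ u = ∑ u, max (β - 1 / g u) 0) →
      ∑ u, Real.log (1 + g u * μ u) ≤
        ∑ u, Real.log (1 + g u * max (β - 1 / g u) 0) :=
  stmt_13_general U g hg β hβ
end
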